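/- arXiv:2502.02705 — 2 statements merged into one kernel-verified Lean document; each statement's English description precedes it below -/
import Mathlib

section
/- For a potential-based reshaped reward r̄(s,s') = r(s) + γΦ(s') - Φ(s), the discounted sum of reshaped rewards along any infinite trajectory equals the discounted sum of original rewards minus Φ(s₀): ∑_{t=0}^∞ γ^t r̄(s_t, s_{t+1}) = ∑_{t=0}^∞ γ^t r(s_t) - Φ(s₀), provided γ ∈ [0,1), r and Φ are bounded. -/
lemma summable_aux {S : Type*} (s : ℕ → S) (f : S → ℝ) (γ : ℝ)
    (hγ0 : 0 ≤ γ) (hγ1 : γ < 1) (C : ℝ) (hf : ∀ x, |f x| ≤ C) :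
    Summable (fun t : ℕ => γ ^ t * f (s t)) := by
  apply Summable.of_abs
  refine Summable.of_nonneg_of_le (fun n => abs_nonneg _) ?_
    ((summable_geometric_of_lt_one hγ0 hγ1).mul_left C)
  intro t
  rw [abs_mul, abs_pow, abs_of_nonneg hγ0, mul_comm]
  exact mul_le_mul_of_nonneg_right (hf _) (pow_nonneg hγ0 t)

/-- For a potential-based reshaped reward
`r̄(s,s') = r(s) + γΦ(s') - Φ(s)`, the discounted sum of reshaped rewards along any
infinite trajectory equals the discounted sum of original rewards minus `Φ(s₀)`,
provided `γ ∈ [0,1)` and `r`, `Φ` are bounded. -/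
theorem stmt_0 {S : Type*} (s : ℕ → S) (r Φ : S → ℝ) (γ : ℝ)
    (hγ0 : 0 ≤ γ) (hγ1 : γ < 1)
    (Cr : ℝ) (hr : ∀ x, |r x| ≤ Cr)
    (CΦ : ℝ) (hΦ : ∀ x, |Φ x| ≤ CΦ) :
    (∑' t : ℕ, γ ^ t * (r (s t) + γ * Φ (s (t + 1)) - Φ (s t)))
      = (∑' t : ℕ, γ ^ t * r (s t)) - Φ (s 0) := by
  have hb := summable_aux s r γ hγ0 hγ1 Cr hr
  have ha := summable_aux s Φ γ hγ0 hγ1 CΦ hΦ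
  have ha' : Summable (fun t : ℕ => γ ^ (t + 1) * Φ (s (t + 1))) :=
    (summable_nat_add_iff 1).2 ha
  have key : (fun t : ℕ => γ ^ t * (r (s t) + γ * Φ (s (t + 1)) - Φ (s t)))
      = fun t : ℕ => γ ^ t * r (s t) + (γ ^ (t + 1) * Φ (s (t + 1)) - γ ^ t * Φ (s t)) := by
    funext t; ring
  rw [key, Summable.tsum_add hb (ha'.sub ha), Summable.tsum_sub ha' ha]
  have h0 : (∑' t : ℕ, γ ^ t * Φ (s t))
      = γ ^ 0 * Φ (s 0) + ∑' t : ℕ, γ ^ (t + 1) * Φ (s (t + 1)) :=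
    Summable.tsum_eq_zero_add ha
  rw [h0]
  ring
end

section
/- (Model value gap, Lemma A.1 analogue) If two Markov transition kernels p̂ and p satisfy ‖p̂(·|s,a) - p(·|s,a)‖₁ ≤ α for all (s,a), the reward r has range Δr = max_s r(s) - min_s r(s), and the terminal value V has range ΔV = max_s V(s) - min_s V(s), then for any H-step policy π_H, the difference between its H-step return under p̂ and under p (with terminal reward γ^H V(s_H) and per-step discounted rewards γ^t r(s_t)) is bounded by γ·((1-γ^{H-1})/(1-γ)·Δr/2 + γ^{H-1}·ΔV/2)·α·H at every initial state. -/
open Finset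

section MDP

variable {S A : Type} [Fintype S] [Fintype A] [DecidableEq S]

/-- `q` is a Markov transition kernel (pmf over next states for each state-action). -/
def IsKernel (q : S → A → S → ℝ) : Prop :=
  ∀ s a, (∀ s', 0 ≤ q s a s') ∧ (∑ s', q s a s') = 1

/-- A time-dependent stochastic policy sequence. -/
def IsPolicySeq (π : ℕ → S → A → ℝ) : Prop :=
  ∀ t s, (∀ a, 0 ≤ π t s a) ∧ (∑ a, π t s a) = 1

/-- A stationary stochastic policy. -/
def MDPIsStationary (π : S → A → ℝ) : Prop :=
  ∀ s, (∀ a, 0 ≤ π s a) ∧ (∑ a, π s a) = 1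

/-- H-step value `E[γ^H V(s_H) + ∑_{t<H} γ^t r(s_t)]` of a time-dependent policy under
kernel `q`, with terminal value `V`. -/
noncomputable def valH (q : S → A → S → ℝ) (r : S → ℝ) (γ : ℝ) (V : S → ℝ) :
    ℕ → (ℕ → S → A → ℝ) → S → ℝ
  | 0, _, s => V s
  | H + 1, π, s =>
      r s + γ * ∑ a, π 0 s a * ∑ s', q s a s' * valH q r γ V H (fun t => π (t + 1)) s'

/-- Optimal H-step value: supremum over H-step (time-dependent stochastic) policies. -/
noncomputable def VHopt (q : S → A → S → ℝ) (r : S → ℝ) (γ : ℝ) (V : S → ℝ)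
    (H : ℕ) (s : S) : ℝ :=
  sSup {x | ∃ π, IsPolicySeq π ∧ valH q r γ V H π s = x}

/-- One step of the state-distribution dynamics induced by kernel `q` and stationary
policy `π`. -/
noncomputable def pushforward (q : S → A → S → ℝ) (π : S → A → ℝ) (μ : S → ℝ) : S → ℝ :=
  fun s' => ∑ s, μ s * ∑ a, π s a * q s a s'

/-- Distribution of the state at time `t` of the Markov chain induced by `π` from `s₀`. -/
noncomputable def stateDist (q : S → A → S → ℝ) (π : S → A → ℝ) (s0 : S) (t : ℕ) :
    S → ℝ :=
  (pushforward q π)^[t] (fun s => if s = s0 then 1 else 0)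

/-- Infinite-horizon discounted value of stationary policy `π` from `s₀`. -/
noncomputable def Vinf (q : S → A → S → ℝ) (r : S → ℝ) (γ : ℝ) (π : S → A → ℝ)
    (s0 : S) : ℝ :=
  ∑' t : ℕ, γ ^ t * ∑ s, stateDist q π s0 t s * r s

/-- Optimal infinite-horizon discounted value. -/
noncomputable def Vstar (q : S → A → S → ℝ) (r : S → ℝ) (γ : ℝ) (s0 : S) : ℝ :=
  sSup {x | ∃ π, MDPIsStationary π ∧ Vinf q r γ π s0 = x}

end MDP

/-!
Write `gap h` for the largest gap between the `h`-step values under `p̂` and `p`, and `osc h` for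
the range of the `h`-step value under `p`. One step of the recursion gives
`gap (h+1) ≤ γ * (gap h + α * osc h / 2)`: the successor values differ by at most `gap h`, and the
two kernels, having equal mass, can be paired against `v - c` for the midpoint `c` of the range of
`v`. The bound `B h = (∑ t < h, γ^t) * Δr + γ^h * ΔV` on `osc h` satisfies `γ * B h ≤ B (h+1)`,
so each of the `H` terms of the unrolled recursion is bounded by the last one.
-/

lemma sum_mul_mem_Icc {ι : Type*} [Fintype ι] {w g : ι → ℝ} {m M : ℝ}
    (hw0 : ∀ i, 0 ≤ w i) (hw1 : ∑ i, w i = 1) (hg : ∀ i, g i ∈ Set.Icc m M) :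
    ∑ i, w i * g i ∈ Set.Icc m M := by
  simpa only [smul_eq_mul] using
    (convex_Icc m M).sum_mem (fun i _ => hw0 i) hw1 (fun i _ => hg i)

lemma abs_sum_mul_le {ι : Type*} [Fintype ι] {w g : ι → ℝ} {B : ℝ}
    (hw0 : ∀ i, 0 ≤ w i) (hw1 : ∑ i, w i = 1) (hg : ∀ i, |g i| ≤ B) :
    |∑ i, w i * g i| ≤ B :=
  abs_le.2 (sum_mul_mem_Icc hw0 hw1 fun i => abs_le.1 (hg i))

lemma abs_sum_mul_sub_sum_mul_le {ι : Type*} [Fintype ι] {w w' f : ι → ℝ} {m M : ℝ}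
    (hw : ∑ i, w' i = ∑ i, w i) (hf : ∀ i, f i ∈ Set.Icc m M) :
    |∑ i, w' i * f i - ∑ i, w i * f i| ≤ (∑ i, |w' i - w i|) * ((M - m) / 2) := by
  set c := (m + M) / 2 with hc
  have hcentre : ∑ i, w' i * f i - ∑ i, w i * f i = ∑ i, (w' i - w i) * (f i - c) := by
    have hmass : ∑ i, (w' i - w i) * c = 0 := by
      rw [← Finset.sum_mul, Finset.sum_sub_distrib, hw, sub_self, zero_mul]
    simp only [mul_sub, sub_mul, Finset.sum_sub_distrib] at hmass ⊢
    linarith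
  rw [hcentre, Finset.sum_mul]
  refine (Finset.abs_sum_le_sum_abs _ _).trans (Finset.sum_le_sum fun i _ => ?_)
  rw [abs_mul]
  refine mul_le_mul_of_nonneg_left (abs_le.2 ⟨?_, ?_⟩) (abs_nonneg _) <;>
    linarith [(hf i).1, (hf i).2, hc]

lemma IsPolicySeq.shift {S A : Type} [Fintype A] {π : ℕ → S → A → ℝ} (hπ : IsPolicySeq π) :
    IsPolicySeq fun t => π (t + 1) :=
  fun t => hπ (t + 1)

section MDP

variable {S A : Type} [Fintype S] [Fintype A]

lemma valH_succ (q : S → A → S → ℝ) (r : S → ℝ) (γ : ℝ) (V : S → ℝ) (h : ℕ)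
    (π : ℕ → S → A → ℝ) (s : S) :
    valH q r γ V (h + 1) π s =
      r s + γ * ∑ a, π 0 s a * ∑ s', q s a s' * valH q r γ V h (fun t => π (t + 1)) s' :=
  rfl

lemma valH_mem_Icc {q : S → A → S → ℝ} (hq : IsKernel q) {r V : S → ℝ} {γ : ℝ} (hγ0 : 0 ≤ γ)
    {rm rM Vm VM : ℝ} (hr : ∀ s, r s ∈ Set.Icc rm rM) (hV : ∀ s, V s ∈ Set.Icc Vm VM)
    (h : ℕ) {π : ℕ → S → A → ℝ} (hπ : IsPolicySeq π) (s : S) :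
    valH q r γ V h π s ∈ Set.Icc ((∑ t ∈ range h, γ ^ t) * rm + γ ^ h * Vm)
      ((∑ t ∈ range h, γ ^ t) * rM + γ ^ h * VM) := by
  induction h generalizing π s with
  | zero => simpa [valH] using hV s
  | succ n ih =>
    obtain ⟨hlo, hhi⟩ := sum_mul_mem_Icc (hπ 0 s).1 (hπ 0 s).2 fun a =>
      sum_mul_mem_Icc (hq s a).1 (hq s a).2 fun s' => ih hπ.shift s'
    obtain ⟨hrlo, hrhi⟩ := hr s
    rw [valH_succ, geom_sum_succ, pow_succ']
    constructor
    · nlinarith [mul_le_mul_of_nonneg_left hlo hγ0]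
    · nlinarith [mul_le_mul_of_nonneg_left hhi hγ0]

lemma abs_valH_succ_sub_le {phat p : S → A → S → ℝ} (hphat : IsKernel phat) (hp : IsKernel p)
    {r V : S → ℝ} {γ : ℝ} (hγ0 : 0 ≤ γ) {α : ℝ} (hα : ∀ s a, ∑ s', |phat s a s' - p s a s'| ≤ α)
    {h : ℕ} {π : ℕ → S → A → ℝ} (hπ : IsPolicySeq π) {D m M : ℝ}
    (hD : ∀ s, |valH phat r γ V h (fun t => π (t + 1)) s - valH p r γ V h (fun t => π (t + 1)) s| ≤ D)
    (hrange : ∀ s, valH p r γ V h (fun t => π (t + 1)) s ∈ Set.Icc m M) (s : S) :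
    |valH phat r γ V (h + 1) π s - valH p r γ V (h + 1) π s| ≤ γ * (D + α * ((M - m) / 2)) := by
  set vhat := valH phat r γ V h fun t => π (t + 1)
  set v := valH p r γ V h fun t => π (t + 1)
  have hmM : 0 ≤ (M - m) / 2 := by linarith [(hrange s).1, (hrange s).2]
  have hstep : ∀ a, |∑ s', phat s a s' * vhat s' - ∑ s', p s a s' * v s'| ≤
      D + α * ((M - m) / 2) := by
    intro a
    have hvalue : |∑ s', phat s a s' * (vhat s' - v s')| ≤ D :=
      abs_sum_mul_le (hphat s a).1 (hphat s a).2 hD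
    have hkernel : |∑ s', phat s a s' * v s' - ∑ s', p s a s' * v s'| ≤ α * ((M - m) / 2) :=
      (abs_sum_mul_sub_sum_mul_le (by rw [(hphat s a).2, (hp s a).2]) hrange).trans
        (mul_le_mul_of_nonneg_right (hα s a) hmM)
    simp only [mul_sub, Finset.sum_sub_distrib] at hvalue
    exact (abs_sub_le _ _ _).trans (add_le_add hvalue hkernel)
  have hdiff : valH phat r γ V (h + 1) π s - valH p r γ V (h + 1) π s =
      γ * ∑ a, π 0 s a * (∑ s', phat s a s' * vhat s' - ∑ s', p s a s' * v s') := by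
    simp only [valH_succ, mul_sub, Finset.sum_sub_distrib]
    ring
  rw [hdiff, abs_mul, abs_of_nonneg hγ0]
  exact mul_le_mul_of_nonneg_left (abs_sum_mul_le (hπ 0 s).1 (hπ 0 s).2 hstep) hγ0

theorem abs_valH_sub_le {phat p : S → A → S → ℝ} (hphat : IsKernel phat) (hp : IsKernel p)
    {r V : S → ℝ} {γ : ℝ} (hγ0 : 0 ≤ γ) {α : ℝ} (hα0 : 0 ≤ α)
    (hα : ∀ s a, ∑ s', |phat s a s' - p s a s'| ≤ α)
    {rm rM Vm VM : ℝ} (hr : ∀ s, r s ∈ Set.Icc rm rM) (hV : ∀ s, V s ∈ Set.Icc Vm VM)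
    (n : ℕ) {π : ℕ → S → A → ℝ} (hπ : IsPolicySeq π) (s : S) :
    |valH phat r γ V (n + 1) π s - valH p r γ V (n + 1) π s| ≤
      γ * ((∑ t ∈ range n, γ ^ t) * ((rM - rm) / 2) + γ ^ n * ((VM - Vm) / 2)) * α * (n + 1) := by
  have hΔr : 0 ≤ rM - rm := by linarith [(hr s).1, (hr s).2]
  induction n generalizing π s with
  | zero =>
    refine (abs_valH_succ_sub_le hphat hp hγ0 hα hπ (D := 0) (fun s' => by simp [valH])
      (fun s' => valH_mem_Icc hp hγ0 hr hV 0 hπ.shift s') s).trans_eq ?_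
    simp only [range_zero, sum_empty, pow_zero]
    ring
  | succ n ih =>
    set B : ℕ → ℝ := fun k => (∑ t ∈ range k, γ ^ t) * ((rM - rm) / 2) + γ ^ k * ((VM - Vm) / 2)
    have hB : γ * B n ≤ B (n + 1) := by
      simp only [B, geom_sum_succ, pow_succ']
      nlinarith
    refine (abs_valH_succ_sub_le hphat hp hγ0 hα hπ (fun s' => ih hπ.shift s')
      (fun s' => valH_mem_Icc hp hγ0 hr hV (n + 1) hπ.shift s') s).trans ?_
    have hhalf : ((∑ t ∈ range (n + 1), γ ^ t) * rM + γ ^ (n + 1) * VM -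
        ((∑ t ∈ range (n + 1), γ ^ t) * rm + γ ^ (n + 1) * Vm)) / 2 = B (n + 1) := by
      simp only [B]; ring
    rw [hhalf]
    push_cast
    have hprev : γ * B n * α * (n + 1) ≤ B (n + 1) * α * (n + 1) := by gcongr
    calc γ * (γ * B n * α * (n + 1) + α * B (n + 1))
        ≤ γ * (B (n + 1) * α * (n + 1) + α * B (n + 1)) := by gcongr
      _ = γ * B (n + 1) * α * (n + 1 + 1) := by ring

end MDP

theorem stmt_4_general {S A : Type} [Fintype S] [Fintype A]
    (phat p : S → A → S → ℝ) (hphat : IsKernel phat) (hp : IsKernel p)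
    (r V : S → ℝ) (γ : ℝ) (hγ0 : 0 ≤ γ) (hγ1 : γ < 1)
    (α : ℝ) (hα : ∀ s a, (∑ s', |phat s a s' - p s a s'|) ≤ α)
    (Δr ΔV : ℝ)
    (hΔr : Δr = (⨆ s, r s) - ⨅ s, r s)
    (hΔV : ΔV = (⨆ s, V s) - ⨅ s, V s)
    (H : ℕ) :
    ∀ πH : ℕ → S → A → ℝ, IsPolicySeq πH → ∀ s : S,
      |valH phat r γ V H πH s - valH p r γ V H πH s| ≤
        γ * ((1 - γ ^ (H - 1)) / (1 - γ) * (Δr / 2) + γ ^ (H - 1) * (ΔV / 2)) * α * H := by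
  intro π hπ s
  obtain ⟨a, -⟩ := nonempty_of_sum_ne_zero ((hπ 0 s).2.trans_ne one_ne_zero)
  have hα0 : 0 ≤ α := (sum_nonneg fun _ _ => abs_nonneg _).trans (hα s a)
  have hr : ∀ s, r s ∈ Set.Icc (⨅ s, r s) (⨆ s, r s) := fun s =>
    ⟨ciInf_le (Finite.bddBelow_range r) s, le_ciSup (Finite.bddAbove_range r) s⟩
  have hV : ∀ s, V s ∈ Set.Icc (⨅ s, V s) (⨆ s, V s) := fun s =>
    ⟨ciInf_le (Finite.bddBelow_range V) s, le_ciSup (Finite.bddAbove_range V) s⟩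
  cases H with
  | zero => simp [valH]
  | succ n =>
    have hgeom : (1 - γ ^ n) / (1 - γ) = ∑ t ∈ range n, γ ^ t := by
      rw [geom_sum_eq hγ1.ne, ← neg_div_neg_eq, neg_sub, neg_sub]
    rw [Nat.add_sub_cancel, hgeom, hΔr, hΔV]
    exact_mod_cast abs_valH_sub_le hphat hp hγ0 hα0 hα hr hV n hπ s

/-- Model value gap, Lemma A.1 analogue: if `‖p̂(·|s,a) - p(·|s,a)‖₁ ≤ α`
for all `(s,a)`, then for any H-step policy the H-step returns under `p̂` and `p`
differ by at most `γ((1-γ^{H-1})/(1-γ)·Δr/2 + γ^{H-1}·ΔV/2)·α·H` at every state. -/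
theorem stmt_4 {S A : Type} [Fintype S] [Fintype A] [DecidableEq S]
    [Nonempty S] [Nonempty A]
    (phat p : S → A → S → ℝ) (hphat : IsKernel phat) (hp : IsKernel p)
    (r V : S → ℝ) (γ : ℝ) (hγ0 : 0 ≤ γ) (hγ1 : γ < 1)
    (α : ℝ) (hα : ∀ s a, (∑ s', |phat s a s' - p s a s'|) ≤ α)
    (Δr ΔV : ℝ)
    (hΔr : Δr = (⨆ s, r s) - ⨅ s, r s)
    (hΔV : ΔV = (⨆ s, V s) - ⨅ s, V s)
    (H : ℕ) (hH : 1 ≤ H) :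
    ∀ πH : ℕ → S → A → ℝ, IsPolicySeq πH → ∀ s : S,
      |valH phat r γ V H πH s - valH p r γ V H πH s| ≤
        γ * ((1 - γ ^ (H - 1)) / (1 - γ) * (Δr / 2) + γ ^ (H - 1) * (ΔV / 2)) * α * H :=
  stmt_4_general phat p hphat hp r V γ hγ0 hγ1 α hα Δr ΔV hΔr hΔV H
end
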